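/- The number of (n−2)-tuples of pairwise nonintersecting lattice paths with unit right and up steps, where for each choice of an omitted startpoint i and omitted endpoint j from {0,…,n−2}, the k-th path runs from startpoint k+[i≤k] to endpoint k+[j≤k] (points on a staircase boundary), summed over all i, j, equals (4^{n−1}−1)/3. Equivalently (by Gessel–Viennot), Σ_{i=0}^{n−2} Σ_{j=0}^{n−2} Δ(n−1)_i^j = (4^{n−1}−1)/3, where Δ(n−1)_i^j are minors of the binomial matrix M(n−1). -/

import Mathlib

/-!
The binomial matrix factors as `M = L Lᵀ` with `L` the lower unitriangular Pascal matrix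
`(u.choose v)` (Vandermonde's identity), and `L⁻¹` is the signed Pascal matrix
`((-1)^(u+v) u.choose v)`. Since `det L = 1`, `adj M = (L⁻¹)ᵀ L⁻¹`, and the signs cancel in the
cofactor: `Δ_i^j = ∑_k (k.choose i) (k.choose j)`. Summing over `i, j` gives `∑_k 4^k`.
-/

/-- The binomial matrix with entry `(u+v).choose u`. -/
def M (n : ℕ) : Matrix (Fin n) (Fin n) ℤ :=
  Matrix.of fun u v => (((u : ℕ) + (v : ℕ)).choose (u : ℕ) : ℤ)

open Finset Matrix

def pascal (n : ℕ) : Matrix (Fin n) (Fin n) ℤ :=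
  of fun u v => ((u : ℕ).choose v : ℤ)

def signedPascal (n : ℕ) : Matrix (Fin n) (Fin n) ℤ :=
  of fun u v => (-1) ^ ((u : ℕ) + v) * ((u : ℕ).choose v : ℤ)

lemma Fin.sum_choose_mul {R : Type*} [Semiring R] {n k : ℕ} (hk : k < n) (f : ℕ → R) :
    ∑ i : Fin n, (k.choose i : R) * f i = ∑ i ∈ range (k + 1), (k.choose i : R) * f i := by
  rw [Fin.sum_univ_eq_sum_range (fun i => (k.choose i : R) * f i) n]
  refine (sum_subset (range_subset_range.2 hk) fun i _ hi => ?_).symm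
  rw [Nat.choose_eq_zero_of_lt (by simpa using hi), Nat.cast_zero, zero_mul]

lemma Fin.sum_choose {R : Type*} [Semiring R] {n k : ℕ} (hk : k < n) :
    ∑ i : Fin n, (k.choose i : R) = 2 ^ k := by
  simpa [← Nat.cast_sum, Nat.sum_range_choose] using Fin.sum_choose_mul hk fun _ => (1 : R)

lemma M_eq_pascal_mul_transpose (n : ℕ) : M n = pascal n * (pascal n)ᵀ := by
  ext u v
  simp only [M, pascal, mul_apply, transpose_apply, of_apply]
  rw [Fin.sum_choose_mul u.isLt (fun k => ((v : ℕ).choose k : ℤ)), add_comm, Nat.add_choose_eq,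
    Nat.sum_antidiagonal_eq_sum_range_succ_mk, Nat.cast_sum]
  refine sum_congr rfl fun k hk => ?_
  rw [Nat.choose_symm (by simpa [Nat.lt_succ_iff] using hk)]
  push_cast
  ring

lemma sum_range_choose_mul_neg_one_pow_mul_choose (i k : ℕ) :
    ∑ j ∈ range (i + 1), (i.choose j : ℤ) * ((-1) ^ (j + k) * (j.choose k : ℤ)) =
      if i = k then 1 else 0 := by
  rcases lt_or_ge i k with hik | hki
  · rw [if_neg hik.ne]
    refine sum_eq_zero fun j hj => ?_
    rw [Nat.choose_eq_zero_of_lt (n := j) (by simp at hj; omega)]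
    simp
  obtain ⟨d, rfl⟩ := Nat.exists_eq_add_of_le hki
  have hterm (m : ℕ) : ((k + d).choose (k + m) : ℤ) * ((-1) ^ (k + m + k) * ((k + m).choose k : ℤ))
      = (k + d).choose k * ((-1) ^ m * d.choose m) := by
    have h := Nat.choose_mul (n := k + d) (Nat.le_add_right k m)
    rw [Nat.add_sub_cancel_left, Nat.add_sub_cancel_left] at h
    zify at h
    rw [show k + m + k = 2 * k + m by ring, pow_add, pow_mul]
    linear_combination (-1) ^ m * h
  rw [add_assoc, sum_range_add, sum_eq_zero fun j hj => ?vanish, zero_add]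
  case vanish => rw [Nat.choose_eq_zero_of_lt (n := j) (by simpa using hj)]; simp
  simp_rw [hterm, ← mul_sum, Int.alternating_sum_range_choose]
  rcases d with _ | d <;> simp

lemma pascal_mul_signedPascal (n : ℕ) : pascal n * signedPascal n = 1 := by
  ext i k
  simp only [pascal, signedPascal, mul_apply, of_apply, one_apply, Fin.ext_iff]
  exact (Fin.sum_choose_mul i.isLt _).trans (sum_range_choose_mul_neg_one_pow_mul_choose i k)

lemma det_pascal (n : ℕ) : (pascal n).det = 1 := by
  have hlower : (pascal n).IsLowerTriangular := fun i j h => by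
    simpa [pascal] using Nat.choose_eq_zero_of_lt (show (i : ℕ) < j from h)
  rw [det_of_isLowerTriangular _ hlower]
  simp [pascal]

lemma adjugate_pascal (n : ℕ) : (pascal n).adjugate = signedPascal n := by
  rw [← inv_eq_right_inv (pascal_mul_signedPascal n), Matrix.inv_def, det_pascal, Ring.inverse_one,
    one_smul]

lemma adjugate_M (n : ℕ) : (M n).adjugate = (signedPascal n)ᵀ * signedPascal n := by
  rw [M_eq_pascal_mul_transpose, adjugate_mul_distrib, ← adjugate_transpose, adjugate_pascal]

lemma det_M_submatrix_succAbove (n : ℕ) (i j : Fin (n + 1)) :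
    ((M (n + 1)).submatrix i.succAbove j.succAbove).det =
      ∑ k : Fin (n + 1), ((k : ℕ).choose i : ℤ) * ((k : ℕ).choose j : ℤ) := by
  have h := adjugate_fin_succ_eq_det_submatrix (M (n + 1)) j i
  rw [adjugate_M] at h
  have hsq (m : ℕ) : ((-1 : ℤ) ^ m) ^ 2 = 1 := by rw [← pow_mul, pow_mul', neg_one_sq, one_pow]
  rw [← one_mul (det _), ← hsq (i + j), sq, mul_assoc, ← h, mul_apply, mul_sum]
  refine sum_congr rfl fun k _ => ?_
  simp only [signedPascal, transpose_apply, of_apply, pow_add]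
  ring_nf
  simp only [pow_mul, hsq, mul_one, mul_comm]

lemma sum_range_four_pow (m : ℕ) : ∑ k ∈ range m, (4 : ℤ) ^ k = (4 ^ m - 1) / 3 := by
  have := geom_sum_mul (4 : ℤ) m
  omega

/-- By Gessel–Viennot, the total number of the relevant tuples of nonintersecting
lattice paths is `∑_{i,j} Δ(n-1)_i^j = (4^(n-1) - 1)/3` (here the original `n` is `n+2`,
so `M(n-1)` is `M(n+1)` and indices range over `{0,…,n}`). -/
theorem gessel_viennot_minor_sum (n : ℕ) :
    ∑ i : Fin (n + 1), ∑ j : Fin (n + 1),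
        ((M (n + 1)).submatrix i.succAbove j.succAbove).det =
      (4 ^ (n + 1) - 1) / 3 := by
  calc ∑ i : Fin (n + 1), ∑ j : Fin (n + 1),
        ((M (n + 1)).submatrix i.succAbove j.succAbove).det
      = ∑ k : Fin (n + 1), (∑ i : Fin (n + 1), ((k : ℕ).choose i : ℤ)) *
          ∑ j : Fin (n + 1), ((k : ℕ).choose j : ℤ) := by
        simp_rw [det_M_submatrix_succAbove, sum_mul_sum]
        exact (sum_congr rfl fun i _ => sum_comm).trans sum_comm
    _ = ∑ k ∈ range (n + 1), (4 : ℤ) ^ k := by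
        simp_rw [Fin.sum_choose (Fin.is_lt _), ← mul_pow]
        exact Fin.sum_univ_eq_sum_range (fun k => (2 * 2 : ℤ) ^ k) _
    _ = (4 ^ (n + 1) - 1) / 3 := sum_range_four_pow _
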